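/- arXiv:1602.02166 — 3 statements merged into one kernel-verified Lean document; each statement's English description precedes it below -/
import Mathlib

section
/- For every positive integer M, the number of orbits of bosonic binary words of length M under the rotation action of the cyclic group Z/M equals (1/(2M)) · ( Σ_{i | M, i odd} φ(i) · 2^{M/i} + 2 · Σ_{i | M, i even} φ(i) · 2^{M/i} ), where the first sum runs over the odd divisors of M and the second over the even divisors of M. -/
/-- Rotation of a binary word of length `M` by `k`: `(c_k · x)(i) = x (i + k)`. -/
def rot (M : ℕ) (k : ZMod M) (x : ZMod M → ZMod 2) : ZMod M → ZMod 2 :=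
  fun i => x (i + k)

/-- The orbit of a binary word under the rotation action of the cyclic group `ZMod M`. -/
def rotOrbit (M : ℕ) (x : ZMod M → ZMod 2) : Set (ZMod M → ZMod 2) :=
  {y | ∃ k : ZMod M, y = rot M k x}

/-- A binary word is bosonic if it contains an even number of ones. -/
def Bosonic (M : ℕ) [NeZero M] (x : ZMod M → ZMod 2) : Prop :=
  Even (Finset.univ.filter (fun i : ZMod M => x i = 1)).card

/-! By Burnside's lemma, `M` times the number of bosonic orbits is the sum over `k : ZMod M` of
the number of bosonic words fixed by `c_k`. A word fixed by `c_k` is a word on the `M / i` cosets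
of the subgroup generated by `k`, where `i` is the order of `k`, and its weight is `i` times the
weight of that word; so all `2 ^ (M / i)` of them are bosonic when `i` is even and exactly half
when `i` is odd. Finally, `ZMod M` has `φ i` elements of order `i` for each `i ∣ M`. -/

open Finset Function

section Parity

variable {α : Type*} [Fintype α]

theorem cast_card_filter_eq_one (x : α → ZMod 2) :
    ((#{i | x i = 1} : ℕ) : ZMod 2) = ∑ i, x i := by
  have hbit : ∀ a : ZMod 2, (if a = 1 then 1 else 0) = a := by decide
  rw [← sum_boole]
  exact sum_congr rfl fun i _ => hbit (x i)

theorem even_card_filter_eq_one_iff (x : α → ZMod 2) :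
    Even #{i | x i = 1} ↔ ∑ i, x i = 0 := by
  rw [← ZMod.natCast_eq_zero_iff_even, cast_card_filter_eq_one]

theorem card_even_weight_mul_two [Nonempty α] :
    Nat.card {x : α → ZMod 2 // Even #{i | x i = 1}} * 2 = 2 ^ Fintype.card α := by
  classical
  let S : (α → ZMod 2) →+ ZMod 2 := AddMonoidHom.mk' (fun x => ∑ i, x i) fun x y => by
    simp only [Pi.add_apply, sum_add_distrib]
  have hS : Surjective S := fun a => ⟨Pi.single (Classical.arbitrary α) a, by simp [S]⟩
  have hker : Nat.card {x : α → ZMod 2 // Even #{i | x i = 1}} = Nat.card S.ker :=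
    Nat.card_congr <| Equiv.subtypeEquivRight fun x => by
      rw [even_card_filter_eq_one_iff, AddMonoidHom.mem_ker]; rfl
  have hquot : Nat.card ((α → ZMod 2) ⧸ S.ker) = 2 := by
    rw [Nat.card_congr (QuotientAddGroup.quotientKerEquivOfSurjective S hS).toEquiv,
      Nat.card_zmod]
  have hlagrange := AddSubgroup.card_eq_card_quotient_mul_card_addSubgroup S.ker
  rw [hquot, Nat.card_eq_fintype_card, Fintype.card_fun, ZMod.card] at hlagrange
  rw [hker, hlagrange, mul_comm]

end Parity

section Periodic

variable {G β : Type*} [AddGroup G]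

def periodicEquiv (g : G) :
    {x : G → β // Periodic x g} ≃ (G ⧸ AddSubgroup.zmultiples g → β) where
  toFun x := x.2.lift
  invFun y := ⟨fun i => y i, fun i => by
    dsimp only
    rw [QuotientAddGroup.mk_add_of_mem _ (AddSubgroup.mem_zmultiples g)]⟩
  left_inv _ := rfl
  right_inv y := funext fun q => QuotientAddGroup.induction_on q fun _ => rfl

theorem card_filter_comp_mk [Fintype G] (H : AddSubgroup G) [Fintype (G ⧸ H)]
    (p : G ⧸ H → Prop) [DecidablePred p] :
    #{i : G | p i} = Nat.card H * #{q | p q} := by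
  rw [← Fintype.card_subtype, ← Fintype.card_subtype, ← Nat.card_eq_fintype_card,
    ← Nat.card_eq_fintype_card, ← Nat.card_prod]
  exact Nat.card_congr (QuotientAddGroup.preimageMkEquivAddSubgroupProdSet H {q | p q})

theorem card_periodic_even_weight_mul_two [Fintype G] (g : G) :
    Nat.card {x : G → ZMod 2 // Periodic x g ∧ Even #{i | x i = 1}} * 2 =
      (if Even (addOrderOf g) then 2 else 1) * 2 ^ (Nat.card G / addOrderOf g) := by
  classical
  set Q := G ⧸ AddSubgroup.zmultiples g
  have hQ : Fintype.card Q = Nat.card G / addOrderOf g := by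
    rw [AddSubgroup.card_eq_card_quotient_mul_card_addSubgroup (AddSubgroup.zmultiples g),
      Nat.card_zmultiples, Nat.mul_div_cancel _ (addOrderOf_pos g), Nat.card_eq_fintype_card]
  have hweight : Nat.card {x : G → ZMod 2 // Periodic x g ∧ Even #{i | x i = 1}} =
      Nat.card {y : Q → ZMod 2 // Even (addOrderOf g * #{q | y q = 1})} := by
    refine Nat.card_congr <| (Equiv.subtypeSubtypeEquivSubtypeInter _ _).symm.trans <|
      Equiv.subtypeEquiv (periodicEquiv g) fun x => ?_
    rw [← Nat.card_zmultiples, ← card_filter_comp_mk]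
    rfl
  rw [hweight, ← hQ]
  split_ifs with hg
  · rw [Nat.card_congr (Equiv.subtypeUnivEquiv fun y => hg.mul_right _),
      Nat.card_eq_fintype_card, Fintype.card_fun, ZMod.card, mul_comm]
  · have hodd : ∀ y : Q → ZMod 2, Even (addOrderOf g * #{q | y q = 1}) ↔ Even #{q | y q = 1} :=
      fun y => by simp [Nat.even_mul, hg]
    rw [Nat.card_congr (Equiv.subtypeEquivRight hodd), card_even_weight_mul_two, one_mul]

end Periodic

theorem sum_addOrderOf_eq_sum_divisors {G R : Type*} [AddGroup G] [Fintype G] [IsAddCyclic G]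
    [AddCommMonoid R] (f : ℕ → R) :
    ∑ g : G, f (addOrderOf g) = ∑ d ∈ (Fintype.card G).divisors, Nat.totient d • f d := by
  classical
  rw [← sum_fiberwise_of_maps_to (g := addOrderOf) (t := (Fintype.card G).divisors)
    fun g _ => Nat.mem_divisors.2 ⟨addOrderOf_dvd_card, Fintype.card_ne_zero⟩]
  refine sum_congr rfl fun d hd => ?_
  rw [sum_congr rfl fun g hg => congrArg f (mem_filter.1 hg).2, sum_const,
    IsAddCyclic.card_addOrderOf_eq_totient (Nat.dvd_of_mem_divisors hd)]

section Rotation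

variable (M : ℕ)

theorem rot_eq_self_iff (k : ZMod M) (x : ZMod M → ZMod 2) : rot M k x = x ↔ Periodic x k :=
  funext_iff

theorem rotOrbit_eq_rotOrbit_iff (x y : ZMod M → ZMod 2) :
    rotOrbit M x = rotOrbit M y ↔ ∃ k, x = rot M k y := by
  refine ⟨fun h => ?_, ?_⟩
  · have hx : x ∈ rotOrbit M x := ⟨0, funext fun i => by simp [rot]⟩
    rwa [h] at hx
  rintro ⟨k, rfl⟩
  ext z
  constructor
  · rintro ⟨l, rfl⟩
    exact ⟨l + k, funext fun i => by simp [rot, add_assoc]⟩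
  · rintro ⟨l, rfl⟩
    exact ⟨l - k, funext fun i => by simp [rot, add_assoc]⟩

variable [NeZero M]

theorem bosonic_rot_iff (k : ZMod M) (x : ZMod M → ZMod 2) :
    Bosonic M (rot M k x) ↔ Bosonic M x :=
  iff_of_eq <| congrArg Even <| card_equiv (Equiv.addRight k) fun i => by
    simp only [mem_filter, mem_univ, true_and]
    rfl

abbrev BosonicWord : Type := {x : ZMod M → ZMod 2 // Bosonic M x}

instance : AddAction (ZMod M) (BosonicWord M) where
  vadd k x := ⟨rot M k x.1, (bosonic_rot_iff M k x.1).2 x.2⟩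
  zero_vadd x := Subtype.ext <| funext fun i => congrArg x.1 (add_zero i)
  add_vadd k l x := Subtype.ext <| funext fun i => congrArg x.1 (add_assoc i k l).symm

noncomputable def bosonicOrbitsEquiv : AddAction.orbitRel.Quotient (ZMod M) (BosonicWord M) ≃
    {S : Set (ZMod M → ZMod 2) // ∃ x, Bosonic M x ∧ S = rotOrbit M x} :=
  (Quotient.congrRight (r' := Setoid.ker fun x : BosonicWord M => rotOrbit M x.1) fun x y => by
      rw [Setoid.ker_def, rotOrbit_eq_rotOrbit_iff, AddAction.orbitRel_apply]
      exact ⟨fun ⟨k, hk⟩ => ⟨k, congrArg Subtype.val hk.symm⟩,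
        fun ⟨k, hk⟩ => ⟨k, Subtype.ext hk.symm⟩⟩).trans <|
    (Setoid.quotientKerEquivRange _).trans <| Equiv.subtypeEquivRight fun S =>
      ⟨fun ⟨x, hx⟩ => ⟨x.1, x.2, hx.symm⟩, fun ⟨x, hx, hS⟩ => ⟨⟨x, hx⟩, hS.symm⟩⟩

theorem card_fixedBy_mul_two (k : ZMod M) :
    Nat.card (AddAction.fixedBy (BosonicWord M) k) * 2 =
      (if Even (addOrderOf k) then 2 else 1) * 2 ^ (M / addOrderOf k) := by
  have hperiodic := card_periodic_even_weight_mul_two k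
  rw [Nat.card_zmod] at hperiodic
  rw [← hperiodic]
  congr 1
  refine Nat.card_congr <| (Equiv.subtypeEquivRight fun x => ?_).trans
    ((Equiv.subtypeSubtypeEquivSubtypeInter _ (fun x => Periodic x k)).trans
      (Equiv.subtypeEquivRight fun x => and_comm))
  rw [AddAction.mem_fixedBy, Subtype.ext_iff]
  exact rot_eq_self_iff M k x.1

theorem card_orbits_mul_eq_sum_card_fixedBy :
    Nat.card (AddAction.orbitRel.Quotient (ZMod M) (BosonicWord M)) * M =
      ∑ k : ZMod M, Nat.card (AddAction.fixedBy (BosonicWord M) k) := by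
  classical
  simp only [Nat.card_eq_fintype_card]
  rw [AddAction.sum_card_fixedBy_eq_card_orbits_mul_card_addGroup, ZMod.card]

end Rotation

/-- For every positive integer `M`, the number of orbits of bosonic binary words of
length `M` under the rotation action of the cyclic group `ZMod M` equals
`(1/(2M)) · ( Σ_{i | M, i odd} φ(i) · 2^(M/i) + 2 · Σ_{i | M, i even} φ(i) · 2^(M/i) )`. -/
theorem number_of_even_b_states (M : ℕ) [NeZero M] :
    (Nat.card {S : Set (ZMod M → ZMod 2) // ∃ x, Bosonic M x ∧ S = rotOrbit M x} : ℚ)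
      = (1 / (2 * M)) *
        ((∑ i ∈ M.divisors.filter (fun i => Odd i),
            (Nat.totient i : ℚ) * 2 ^ (M / i))
          + 2 * ∑ i ∈ M.divisors.filter (fun i => Even i),
            (Nat.totient i : ℚ) * 2 ^ (M / i)) := by
  have hcount : Nat.card (AddAction.orbitRel.Quotient (ZMod M) (BosonicWord M)) * (2 * M) =
      ∑ i ∈ M.divisors.filter (fun i => Odd i), Nat.totient i * 2 ^ (M / i) +
        2 * ∑ i ∈ M.divisors.filter (fun i => Even i), Nat.totient i * 2 ^ (M / i) := by
    calc _ = ∑ k : ZMod M, Nat.card (AddAction.fixedBy (BosonicWord M) k) * 2 := by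
          rw [← sum_mul, ← card_orbits_mul_eq_sum_card_fixedBy]; ring
      _ = ∑ i ∈ M.divisors, Nat.totient i * ((if Even i then 2 else 1) * 2 ^ (M / i)) := by
          rw [sum_congr rfl fun k _ => card_fixedBy_mul_two M k,
            sum_addOrderOf_eq_sum_divisors (fun i => (if Even i then 2 else 1) * 2 ^ (M / i)),
            ZMod.card]
          simp only [smul_eq_mul]
      _ = _ := by
          rw [← sum_filter_not_add_sum_filter _ (fun i => Even i), mul_sum]
          congr 1 <;> refine sum_congr (by simp [Nat.not_even_iff_odd]) fun i hi => ?_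
          · rw [if_neg (Nat.not_even_iff_odd.2 (mem_filter.1 hi).2), one_mul]
          · rw [if_pos (mem_filter.1 hi).2]
            ring
  have hM : (2 * M : ℚ) ≠ 0 := mul_ne_zero two_ne_zero (Nat.cast_ne_zero.2 (NeZero.ne M))
  rw [← Nat.card_congr (bosonicOrbitsEquiv M), eq_comm, one_div_mul_eq_div, div_eq_iff hM]
  exact_mod_cast hcount.symm
end

section
/- Let M be a positive integer, let k be an integer with 1 ≤ k ≤ M, and set d = gcd(M,k). If M/d is odd, then the number of fermionic binary words of length M fixed by the rotation c_k equals 2^{d−1}, and the number of bosonic binary words of length M fixed by c_k also equals 2^{d−1}. -/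
/-- A binary word is fermionic if it contains an odd number of ones. -/
def Fermionic (M : ℕ) [NeZero M] (x : ZMod M → ZMod 2) : Prop :=
  Odd (Finset.univ.filter (fun i : ZMod M => x i = 1)).card

/-!
A word fixed by `c_k` is periodic with period `k`, hence (Bézout) with period `d = gcd M k`, so it
is the pullback `y ∘ c` of a word `y` of length `d` along the reduction `c : ZMod M → ZMod d`.
Each fibre of `c` has `M / d` points, so `y ∘ c` has `M / d` times as many ones as `y`; when
`M / d` is odd this preserves parity. Finally, exactly half of the `2 ^ d` words of length `d`
have an odd number of ones, since the parity is the sum map `(ZMod d → ZMod 2) →+ ZMod 2`,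
a surjective homomorphism whose two fibres have equal size.
-/

open Finset Function

namespace AddMonoidHom

variable {G H : Type*} [AddGroup G] [Fintype G] [AddGroup H] [Fintype H] [DecidableEq H]

theorem card_fiber_mul_card_eq_card (f : G →+ H) (hf : Surjective f) (h : H) :
    #{g | f g = h} * Fintype.card H = Fintype.card G := by
  rw [← card_univ (α := G),
    card_eq_sum_card_fiberwise (f := f) (s := univ) (t := univ) fun g _ => mem_univ _,
    sum_const_nat fun h' _ => card_fiber_eq_of_mem_range f (hf h') (hf h), mul_comm, card_univ]

theorem sum_comp_eq_card_ker_nsmul_sum (f : G →+ H) (hf : Surjective f) {A : Type*}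
    [AddCommMonoid A] (y : H → A) :
    ∑ g, y (f g) = #{g | f g = 0} • ∑ h, y h := by
  rw [← sum_fiberwise univ f, smul_sum]
  refine sum_congr rfl fun h _ => ?_
  rw [sum_congr rfl fun g hg => congrArg y (mem_filter.mp hg).2, sum_const,
    card_fiber_eq_of_mem_range f (hf h) (hf 0)]

end AddMonoidHom

theorem Fintype.card_subtype_sum_eq {ι A : Type*} [Fintype ι] [DecidableEq ι] [Nonempty ι]
    [AddCommGroup A] [Fintype A] [DecidableEq A] (a : A) :
    Fintype.card {x : ι → A // ∑ i, x i = a} = Fintype.card A ^ (Fintype.card ι - 1) := by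
  let sumHom : (ι → A) →+ A := ∑ i, Pi.evalAddMonoidHom (fun _ => A) i
  have hsum (x : ι → A) : sumHom x = ∑ i, x i := by simp [sumHom]
  have hsurj : Surjective sumHom := fun b =>
    ⟨Pi.single (Classical.arbitrary ι) b, by rw [hsum, Fintype.sum_pi_single']⟩
  have := sumHom.card_fiber_mul_card_eq_card hsurj a
  simp only [hsum, Fintype.card_pi, prod_const, card_univ] at this
  rw [Fintype.card_subtype]
  apply Nat.eq_of_mul_eq_mul_right (Fintype.card_pos (α := A))
  rw [this, ← pow_succ, Nat.sub_add_cancel Fintype.card_pos]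

namespace ZMod

theorem natCast_card_filter_eq_one_eq_sum {ι : Type*} [Fintype ι] (x : ι → ZMod 2) :
    (#{i | x i = 1} : ZMod 2) = ∑ i, x i := by
  have hbool : ∀ a : ZMod 2, a = if a = 1 then 1 else 0 := by decide
  rw [natCast_card_filter]
  exact sum_congr rfl fun i _ => (hbool (x i)).symm

section Periodic

variable {α : Type*} {M : ℕ} {x : ZMod M → α}

theorem periodic_natCast_gcd {k : ℕ} (hx : Periodic x k) :
    Periodic x (M.gcd k) := by
  have hgcd : ((M.gcd k : ℕ) : ZMod M) = (M.gcdB k : ZMod M) * k := by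
    have := congrArg (Int.cast : ℤ → ZMod M) (Nat.gcd_eq_gcd_ab M k)
    push_cast at this
    rw [this, natCast_self, zero_mul, zero_add, mul_comm]
  rw [hgcd]
  exact hx.int_mul _

theorem periodic_natCast_iff_factorsThrough_castHom {d : ℕ} (hd : d ∣ M) :
    Periodic x d ↔ FactorsThrough x (castHom hd (ZMod d)) := by
  constructor
  · intro hx i j hij
    have hker : castHom hd (ZMod d) (i - j) = 0 := by rw [map_sub, hij, sub_self]
    rw [← intCast_zmod_cast (i - j), map_intCast, intCast_zmod_eq_zero_iff_dvd] at hker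
    obtain ⟨m, hm⟩ := hker
    have hij' : i = j + (m : ZMod M) * d := by
      rw [← sub_eq_iff_eq_add', ← intCast_zmod_cast (i - j), hm]
      push_cast
      ring
    rw [hij', hx.int_mul m]
  · intro hx i
    exact hx (by rw [map_add, map_natCast, natCast_self, add_zero])

theorem periodic_natCast_iff_factorsThrough_castHom_gcd (k : ℕ) :
    Periodic x k ↔ FactorsThrough x (castHom (M.gcd_dvd_left k) (ZMod (M.gcd k))) := by
  refine ⟨fun hx => (periodic_natCast_iff_factorsThrough_castHom _).mp (periodic_natCast_gcd hx),
    fun hx i => hx ?_⟩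
  rw [map_add, map_natCast, (natCast_eq_zero_iff _ _).mpr (M.gcd_dvd_right k), add_zero]

end Periodic

theorem sum_comp_castHom_of_odd {M d : ℕ} [NeZero M] [NeZero d] (hd : d ∣ M)
    (hodd : Odd (M / d)) (y : ZMod d → ZMod 2) : ∑ i, y (castHom hd (ZMod d) i) = ∑ j, y j := by
  let c := (castHom hd (ZMod d)).toAddMonoidHom
  have hc : Surjective c := castHom_surjective hd
  have hker : #{i | c i = 0} = M / d := by
    have := c.card_fiber_mul_card_eq_card hc 0
    rw [card, card] at this
    exact (Nat.div_eq_of_eq_mul_left (NeZero.pos d) this.symm).symm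
  change ∑ i, y (c i) = _
  rw [c.sum_comp_eq_card_ker_nsmul_sum hc, hker, nsmul_eq_mul,
    (natCast_eq_one_iff_odd).mpr hodd, one_mul]

end ZMod

theorem rot_eq_self_iff_periodic {M : ℕ} {k : ZMod M} {x : ZMod M → ZMod 2} :
    rot M k x = x ↔ Periodic x k :=
  funext_iff

theorem fermionic_iff_sum_eq_one {M : ℕ} [NeZero M] {x : ZMod M → ZMod 2} :
    Fermionic M x ↔ ∑ i, x i = 1 := by
  rw [Fermionic, ← ZMod.natCast_eq_one_iff_odd, ZMod.natCast_card_filter_eq_one_eq_sum]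

theorem bosonic_iff_sum_eq_zero {M : ℕ} [NeZero M] {x : ZMod M → ZMod 2} :
    Bosonic M x ↔ ∑ i, x i = 0 := by
  rw [Bosonic, ← ZMod.natCast_eq_zero_iff_even, ZMod.natCast_card_filter_eq_one_eq_sum]

theorem card_rot_fixed_sum_eq {M k : ℕ} [NeZero M] (hodd : Odd (M / M.gcd k)) (a : ZMod 2) :
    Nat.card {x : ZMod M → ZMod 2 // rot M k x = x ∧ ∑ i, x i = a} = 2 ^ (M.gcd k - 1) := by
  have : NeZero (M.gcd k) := ⟨(Nat.gcd_pos_of_pos_left k (NeZero.pos M)).ne'⟩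
  set c := ZMod.castHom (M.gcd_dvd_left k) (ZMod (M.gcd k))
  have hsum (y : ZMod (M.gcd k) → ZMod 2) : ∑ i, (y ∘ c) i = ∑ j, y j :=
    ZMod.sum_comp_castHom_of_odd _ hodd y
  let lift (y : {y : ZMod (M.gcd k) → ZMod 2 // ∑ j, y j = a}) :
      {x : ZMod M → ZMod 2 // rot M k x = x ∧ ∑ i, x i = a} :=
    ⟨y.1 ∘ c, rot_eq_self_iff_periodic.mpr
      ((ZMod.periodic_natCast_iff_factorsThrough_castHom_gcd k).mpr
        (FactorsThrough.rfl.comp_left y.1)), (hsum y.1).trans y.2⟩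
  have hlift : Bijective lift := by
    refine ⟨fun y y' h => Subtype.ext ((ZMod.castHom_surjective _).injective_comp_right
      (congrArg Subtype.val h)), fun ⟨x, hfix, hx⟩ => ?_⟩
    obtain ⟨y, rfl⟩ := (factorsThrough_iff x).mp
      ((ZMod.periodic_natCast_iff_factorsThrough_castHom_gcd k).mp
        (rot_eq_self_iff_periodic.mp hfix))
    exact ⟨⟨y, (hsum y).symm.trans hx⟩, rfl⟩
  rw [← Nat.card_congr (Equiv.ofBijective lift hlift), Nat.card_eq_fintype_card,
    Fintype.card_subtype_sum_eq, ZMod.card, ZMod.card]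

theorem fixed_words_of_rotation_odd_case_general (M k : ℕ) [NeZero M]
    (d : ℕ) (hd : d = Nat.gcd M k)
    (hodd : Odd (M / d)) :
    Nat.card {x : ZMod M → ZMod 2 // rot M (k : ZMod M) x = x ∧ Fermionic M x}
        = 2 ^ (d - 1)
    ∧ Nat.card {x : ZMod M → ZMod 2 // rot M (k : ZMod M) x = x ∧ Bosonic M x}
        = 2 ^ (d - 1) := by
  subst hd
  simp only [fermionic_iff_sum_eq_one, bosonic_iff_sum_eq_zero]
  exact ⟨card_rot_fixed_sum_eq hodd 1, card_rot_fixed_sum_eq hodd 0⟩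

/-- Let `1 ≤ k ≤ M` and `d = gcd(M,k)`.  If `M/d` is odd then there are `2^(d-1)`
fermionic binary words of length `M` fixed by the rotation `c_k`, and likewise `2^(d-1)`
bosonic binary words of length `M` fixed by `c_k`. -/
theorem fixed_words_of_rotation_odd_case (M k : ℕ) [NeZero M]
    (hk1 : 1 ≤ k) (hk2 : k ≤ M) (d : ℕ) (hd : d = Nat.gcd M k)
    (hodd : Odd (M / d)) :
    Nat.card {x : ZMod M → ZMod 2 // rot M (k : ZMod M) x = x ∧ Fermionic M x}
        = 2 ^ (d - 1)
    ∧ Nat.card {x : ZMod M → ZMod 2 // rot M (k : ZMod M) x = x ∧ Bosonic M x}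
        = 2 ^ (d - 1) :=
  fixed_words_of_rotation_odd_case_general M k d hd hodd
end

section
/- Let G be an r×r complex Hermitian positive semidefinite matrix of rank p, and let ℋ be an r×r complex matrix with Gℋ = ℋ†G. Let S be a p×r complex matrix with S·G·S† = I_p, and set 𝐇 = S·G·ℋ·S†. If ℋV = E·V for some vector V in ℂʳ with V†GV > 0, then E is real and E is an eigenvalue of the p×p matrix 𝐇. (Thus an eigenstate of ℋ with positive norm is a physical energy state.) -/
open Matrix
open scoped ComplexOrder

/-!
Since `S G S† = 1`, the rank of `S G` is at least `p = rank G`, so `S G` and `G` have the same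
kernel. Every `x` differs from `S† S G x` by an element of `ker (S G) = ker G`, which gives
`G S† S G = G`. With this identity `W = S G V` satisfies `𝐇 W = S G ℋ V = E W`, and `W ≠ 0`
because `G V = G S† W`. Reality of `E` is the usual argument:
`E V†GV = V†GℋV = V†ℋ†GV = Ē V†GV`.
-/

namespace Matrix

variable {K : Type*} [Field K] {l m n : Type*} [Fintype m] [Fintype n]

theorem ker_mulVecLin_mul_eq_of_rank_le (B : Matrix l m K) (A : Matrix m n K)
    (h : A.rank ≤ (B * A).rank) :
    LinearMap.ker (B * A).mulVecLin = LinearMap.ker A.mulVecLin := by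
  have hle : LinearMap.ker A.mulVecLin ≤ LinearMap.ker (B * A).mulVecLin := by
    rw [mulVecLin_mul]
    exact LinearMap.ker_le_ker_comp _ _
  refine (Submodule.eq_of_le_of_finrank_le hle ?_).symm
  have hA := LinearMap.finrank_range_add_finrank_ker A.mulVecLin
  have hBA := LinearMap.finrank_range_add_finrank_ker (B * A).mulVecLin
  unfold rank at h
  omega

theorem mul_mul_mul_eq_self_of_rank_le {p : Type*} [Fintype p] [DecidableEq p]
    {G : Matrix n n K} {S : Matrix p n K} {T : Matrix n p K}
    (hS : S * G * T = 1) (hrank : G.rank ≤ Fintype.card p) :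
    G * T * S * G = G := by
  have hrankSG : G.rank ≤ (S * G).rank :=
    calc G.rank ≤ (S * G * T).rank := by rwa [hS, rank_one]
      _ ≤ (S * G).rank := rank_mul_le_left _ _
  have hker := ker_mulVecLin_mul_eq_of_rank_le S G hrankSG
  refine mulVec_injective (funext fun x => ?_)
  have hz : x - (T * S * G) *ᵥ x ∈ LinearMap.ker (S * G).mulVecLin := by
    simp [mulVec_sub, mulVec_mulVec, ← Matrix.mul_assoc, hS]
  rw [hker] at hz
  simpa [mulVec_sub, sub_eq_zero, mulVec_mulVec, Matrix.mul_assoc, eq_comm] using hz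

theorem star_eq_of_mul_eq_conjTranspose_mul [StarRing K] {G H : Matrix n n K} {V : n → K}
    {E : K} (hGH : G * H = Hᴴ * G) (heig : H *ᵥ V = E • V) (hV : star V ⬝ᵥ G *ᵥ V ≠ 0) :
    star E = E := by
  refine mul_right_cancel₀ hV ?_
  calc star E * (star V ⬝ᵥ G *ᵥ V) = star (H *ᵥ V) ⬝ᵥ G *ᵥ V := by
        rw [heig, star_smul, smul_dotProduct, smul_eq_mul]
    _ = star V ⬝ᵥ (Hᴴ * G) *ᵥ V := by
        simp only [star_mulVec, ← mulVec_mulVec, dotProduct_mulVec]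
    _ = star V ⬝ᵥ (G * H) *ᵥ V := by rw [hGH]
    _ = E * (star V ⬝ᵥ G *ᵥ V) := by
        rw [← mulVec_mulVec, heig, mulVec_smul, dotProduct_smul, smul_eq_mul]

theorem mulVec_mul_mulVec_eq_smul [StarRing K] {p : Type*} [Fintype p]
    {G H : Matrix n n K} {S : Matrix p n K} {T : Matrix n p K} {V : n → K} {E : K}
    (hGTSG : G * T * S * G = G) (hGH : G * H = Hᴴ * G) (heig : H *ᵥ V = E • V) :
    (S * G * H * T) *ᵥ ((S * G) *ᵥ V) = E • ((S * G) *ᵥ V) := by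
  have hGH' : G * H * T * S * G = G * H := by
    rw [hGH]
    simp only [Matrix.mul_assoc] at hGTSG ⊢
    rw [hGTSG]
  calc (S * G * H * T) *ᵥ ((S * G) *ᵥ V) = (S * (G * H * T * S * G)) *ᵥ V := by
        simp only [mulVec_mulVec, Matrix.mul_assoc]
    _ = (S * G) *ᵥ (H *ᵥ V) := by rw [hGH', mulVec_mulVec, Matrix.mul_assoc]
    _ = E • ((S * G) *ᵥ V) := by rw [heig, mulVec_smul]

end Matrix

theorem positive_norm_eigenstate_is_physical_general {r p : ℕ}
    (G H : Matrix (Fin r) (Fin r) ℂ)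
    (hrank : G.rank = p) (hGH : G * H = Hᴴ * G)
    (S : Matrix (Fin p) (Fin r) ℂ) (hS : S * G * Sᴴ = 1)
    (Hbf : Matrix (Fin p) (Fin p) ℂ) (hHbf : Hbf = S * G * H * Sᴴ)
    (V : Fin r → ℂ) (E : ℂ)
    (heig : H.mulVec V = E • V)
    (hpos : 0 < star V ⬝ᵥ G.mulVec V) :
    (∃ t : ℝ, E = (t : ℂ)) ∧ ∃ W : Fin p → ℂ, W ≠ 0 ∧ Hbf.mulVec W = E • W := by
  have hnorm : star V ⬝ᵥ G *ᵥ V ≠ 0 := hpos.ne'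
  have hGTSG : G * Sᴴ * S * G = G :=
    mul_mul_mul_eq_self_of_rank_le hS (by rw [hrank, Fintype.card_fin])
  refine ⟨Complex.conj_eq_iff_real.mp (star_eq_of_mul_eq_conjTranspose_mul hGH heig hnorm),
    (S * G) *ᵥ V, fun hW => hnorm ?_, hHbf ▸ mulVec_mul_mulVec_eq_smul hGTSG hGH heig⟩
  rw [← hGTSG, Matrix.mul_assoc, ← mulVec_mulVec, hW, mulVec_zero, dotProduct_zero]

/-- Let `G` be an `r×r` Hermitian positive semidefinite matrix of rank `p`, let `ℋ`
satisfy `Gℋ = ℋ†G`, let `S` be a `p×r` matrix with `S G S† = I`, and set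
`𝐇 = S G ℋ S†`.  If `ℋ V = E V` for a vector `V` with `V† G V > 0`, then `E` is real
and `E` is an eigenvalue of `𝐇`. -/
theorem positive_norm_eigenstate_is_physical {r p : ℕ}
    (G H : Matrix (Fin r) (Fin r) ℂ)
    (hG : G.PosSemidef) (hrank : G.rank = p) (hGH : G * H = Hᴴ * G)
    (S : Matrix (Fin p) (Fin r) ℂ) (hS : S * G * Sᴴ = 1)
    (Hbf : Matrix (Fin p) (Fin p) ℂ) (hHbf : Hbf = S * G * H * Sᴴ)
    (V : Fin r → ℂ) (E : ℂ)
    (heig : H.mulVec V = E • V)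
    (hpos : 0 < star V ⬝ᵥ G.mulVec V) :
    (∃ t : ℝ, E = (t : ℂ)) ∧ ∃ W : Fin p → ℂ, W ≠ 0 ∧ Hbf.mulVec W = E • W :=
  positive_norm_eigenstate_is_physical_general G H hrank hGH S hS Hbf hHbf V E heig hpos
end
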